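/- Fix t₀ ∈ ℝ. Let (Δ̃_k)_{k ≥ −1} be real-analytic functions on ℝ with Taylor expansions Δ̃_k(x) = Σ_{n≥0} Δ̃_{k,n} xⁿ at 0, satisfying for all k ≥ 1 the recurrence Δ̃_k(x) = (2 + 2·cos((x + t₀)/2))·Δ̃_{k−1}(x/2) + Δ̃_{k−2}(x/4)·(4·cos((x + t₀)/4) + Δ̃_{k−2}(x/4))·(2·cos((x + t₀)/2) − 2 + Δ̃_{k−1}(x/2)). Fix k ≥ 0 and suppose 0 < δ ≤ 1 and 0 < β ≤ 1 are such that |Δ̃_{k−1,n}| ≤ δ·β^{−n} and |Δ̃_{k,n}| ≤ δ·β^{−n} for every n ≥ 0. Then |Δ̃_{k+1,n}| ≤ 152·δ/(2β)ⁿ for every n ≥ 0. -/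

import Mathlib

/-!
Say that `f` has geometric coefficient bound `(C, r)` if it is smooth and its `n`-th Taylor
coefficient at `0` is at most `C rⁿ` in absolute value. Such bounds survive sums, constant shifts
and rescalings `x ↦ c x` (with `r ↦ |c| r`), and products in which one factor lives on a strictly
smaller scale `ρ r`, `ρ < 1`, at the cost of a factor `1 / (1 - ρ)`. With `u = 1 / (2β)` the
rescaled errors `Δ̃_k (x/2)` and `Δ̃_{k-1} (x/4)` have bounds `(δ, u)` and `(δ, u/2)`, and the
cosine terms have factorially decaying coefficients; multiplying out the recurrence gives
`404 δ / 3 ≤ 152 δ` at scale `u`.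
-/

open Real Finset
open scoped ContDiff Nat

namespace ThueMorse

noncomputable def taylorCoeff (f : ℝ → ℝ) (n : ℕ) : ℝ := iteratedDeriv n f 0 / n !

structure GeomCoeffBound (f : ℝ → ℝ) (C r : ℝ) : Prop where
  contDiff : ContDiff ℝ ∞ f
  le : ∀ n, |taylorCoeff f n| ≤ C * r ^ n

lemma two_pow_le_two_mul_factorial : ∀ n : ℕ, 2 ^ n ≤ 2 * n !
  | 0 => by norm_num
  | n + 1 => by
    have h : 2 ^ n ≤ (n + 1)! := by
      simpa [add_comm] using Nat.factorial_mul_pow_le_factorial (m := 1) (n := n)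
    rw [pow_succ]
    linarith

lemma inv_factorial_le (n : ℕ) : ((n ! : ℝ))⁻¹ ≤ 2 * 2⁻¹ ^ n := by
  have h : (2 : ℝ) ^ n ≤ 2 * n ! := by exact_mod_cast two_pow_le_two_mul_factorial n
  rw [inv_pow, ← div_eq_mul_inv, le_div_iff₀ (by positivity), inv_mul_le_iff₀ (by positivity)]
  linarith

lemma taylorCoeff_mul {f g : ℝ → ℝ} {n : ℕ} (hf : ContDiff ℝ n f) (hg : ContDiff ℝ n g) :
    taylorCoeff (f * g) n = ∑ i ∈ range (n + 1), taylorCoeff f i * taylorCoeff g (n - i) := by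
  rw [taylorCoeff, iteratedDeriv_mul hf.contDiffAt hg.contDiffAt, sum_div]
  refine sum_congr rfl fun i hi => ?_
  have hin : i ≤ n := Nat.lt_succ_iff.mp (mem_range.mp hi)
  have hchoose : (n.choose i : ℝ) ≠ 0 := by exact_mod_cast (Nat.choose_pos hin).ne'
  rw [taylorCoeff, taylorCoeff, ← Nat.choose_mul_factorial_mul_factorial hin]
  push_cast
  field_simp

namespace GeomCoeffBound

variable {f g : ℝ → ℝ} {a b C C' r r' : ℝ}

lemma nonneg (h : GeomCoeffBound f C r) : 0 ≤ C := by
  simpa using (abs_nonneg _).trans (h.le 0)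

lemma mono (h : GeomCoeffBound f C r) (hC : C ≤ C') (hr : 0 ≤ r) (hr' : r ≤ r') :
    GeomCoeffBound f C' r' :=
  ⟨h.contDiff, fun n => (h.le n).trans
    (mul_le_mul hC (pow_le_pow_left₀ hr hr' n) (by positivity) (h.nonneg.trans hC))⟩

lemma add (hf : GeomCoeffBound f a r) (hg : GeomCoeffBound g b r) :
    GeomCoeffBound (f + g) (a + b) r := by
  refine ⟨hf.contDiff.add hg.contDiff, fun n => ?_⟩
  have hfg : taylorCoeff (f + g) n = taylorCoeff f n + taylorCoeff g n := by
    rw [taylorCoeff, iteratedDeriv_add (hf.contDiff.of_le (by exact_mod_cast le_top)).contDiffAt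
      (hg.contDiff.of_le (by exact_mod_cast le_top)).contDiffAt, add_div]
    rfl
  rw [hfg, add_mul]
  exact (abs_add_le _ _).trans (add_le_add (hf.le n) (hg.le n))

lemma const_add (h : GeomCoeffBound f C r) (c : ℝ) (h0 : |c + f 0| ≤ C) :
    GeomCoeffBound (fun x => c + f x) C r where
  contDiff := contDiff_const.add h.contDiff
  le
  | 0 => by simpa [taylorCoeff] using h0
  | n + 1 => by simpa only [taylorCoeff, iteratedDeriv_const_add n.succ_pos] using h.le (n + 1)

lemma const_mul (h : GeomCoeffBound f C r) (c : ℝ) :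
    GeomCoeffBound (fun x => c * f x) (|c| * C) r where
  contDiff := contDiff_const.mul h.contDiff
  le n := by
    rw [taylorCoeff, iteratedDeriv_const_mul_field, mul_div_assoc, abs_mul, mul_assoc]
    exact mul_le_mul_of_nonneg_left (h.le n) (abs_nonneg c)

lemma comp_const_mul (h : GeomCoeffBound f C r) (c : ℝ) :
    GeomCoeffBound (fun x => f (c * x)) C (|c| * r) where
  contDiff := h.contDiff.comp (contDiff_const.mul contDiff_id)
  le n := by
    rw [taylorCoeff, congrFun (iteratedDeriv_comp_const_mul
      (h.contDiff.of_le (by exact_mod_cast le_top)) c) 0, mul_zero, mul_div_assoc, abs_mul,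
      abs_pow, mul_pow, mul_left_comm]
    exact mul_le_mul_of_nonneg_left (h.le n) (by positivity)

lemma mul {ρ : ℝ} (hf : GeomCoeffBound f a (ρ * r)) (hg : GeomCoeffBound g b r) (hρ0 : 0 ≤ ρ)
    (hρ1 : ρ < 1) (hr : 0 ≤ r) : GeomCoeffBound (f * g) (a * b / (1 - ρ)) r := by
  refine ⟨hf.contDiff.mul hg.contDiff, fun n => ?_⟩
  have ha := hf.nonneg
  have hb := hg.nonneg
  rw [taylorCoeff_mul (hf.contDiff.of_le (by exact_mod_cast le_top))
    (hg.contDiff.of_le (by exact_mod_cast le_top))]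
  calc |∑ i ∈ range (n + 1), taylorCoeff f i * taylorCoeff g (n - i)|
      ≤ ∑ i ∈ range (n + 1), a * (ρ * r) ^ i * (b * r ^ (n - i)) := by
        refine (abs_sum_le_sum_abs _ _).trans (sum_le_sum fun i _ => ?_)
        rw [abs_mul]
        exact mul_le_mul (hf.le i) (hg.le _) (abs_nonneg _) (by positivity)
    _ = a * b * r ^ n * ∑ i ∈ range (n + 1), ρ ^ i := by
        rw [mul_sum]
        refine sum_congr rfl fun i hi => ?_
        rw [← pow_sub_mul_pow r (Nat.lt_succ_iff.mp (mem_range.mp hi))]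
        ring
    _ ≤ a * b * r ^ n * (1 - ρ)⁻¹ := by
        refine mul_le_mul_of_nonneg_left ?_ (by positivity)
        have hgeom := geom_sum_Ico_le_of_lt_one (m := 0) (n := n + 1) hρ0 hρ1
        rwa [← range_eq_Ico, pow_zero, one_div] at hgeom
    _ = a * b / (1 - ρ) * r ^ n := by ring

end GeomCoeffBound

lemma geomCoeffBound_cos_add (d : ℝ) : GeomCoeffBound (fun y => cos (y + d)) 2 2⁻¹ where
  contDiff := by fun_prop
  le n := by
    rw [taylorCoeff, congrFun (iteratedDeriv_comp_add_const n cos d) 0, zero_add, abs_div,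
      Nat.abs_cast, div_eq_mul_inv]
    calc |iteratedDeriv n cos d| * ((n ! : ℝ))⁻¹ ≤ 1 * (2 * 2⁻¹ ^ n) :=
          mul_le_mul (abs_iteratedDeriv_cos_le_one n d) (inv_factorial_le n) (by positivity)
            zero_le_one
      _ = 2 * 2⁻¹ ^ n := one_mul _

lemma geomCoeffBound_const_add_two_mul_cos {a : ℝ} (ha : |a| ≤ 2) (c d : ℝ) :
    GeomCoeffBound (fun x => a + 2 * cos (c * x + d)) 4 (|c| * 2⁻¹) := by
  refine ((((geomCoeffBound_cos_add d).comp_const_mul c).const_mul 2).const_add a ?_).mono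
    (by norm_num) (by positivity) le_rfl
  calc |a + 2 * cos (c * 0 + d)| ≤ |a| + |2| * |cos (c * 0 + d)| :=
        (abs_add_le _ _).trans_eq (by rw [abs_mul])
    _ ≤ 2 + 2 * 1 := by gcongr <;> simp [abs_cos_le_one]
    _ = |2| * 2 := by norm_num

lemma geomCoeffBound_model_step {A B C E F : ℝ → ℝ} {δ u : ℝ} (hδ : δ ≤ 1) (hu : 2⁻¹ ≤ u)
    (hA : GeomCoeffBound A 4 4⁻¹) (hB : GeomCoeffBound B δ u) (hC : GeomCoeffBound C δ (2⁻¹ * u))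
    (hE : GeomCoeffBound E 8 8⁻¹) (hF : GeomCoeffBound F 4 4⁻¹) :
    GeomCoeffBound (A * B + C * (E + C) * (F + B)) (152 * δ) u := by
  have hu0 : 0 ≤ u := by linarith
  have hQ : GeomCoeffBound (F + B) 5 u :=
    ((hF.mono le_rfl (by norm_num) (by linarith)).add hB).mono (by linarith) hu0 le_rfl
  have hEQ : GeomCoeffBound (E * (F + B)) (8 * 5 / (1 - 4⁻¹)) u :=
    (hE.mono (r' := 4⁻¹ * u) le_rfl (by norm_num) (by linarith)).mul hQ (by norm_num)
      (by norm_num) hu0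
  have hCQ : GeomCoeffBound (C * (F + B)) (1 * 5 / (1 - 2⁻¹)) u :=
    (hC.mono hδ (by positivity) le_rfl).mul hQ (by norm_num) (by norm_num) hu0
  have hCR := hC.mul (hEQ.add hCQ) (by norm_num) (by norm_num) hu0
  have hAB := (hA.mono (r' := 2⁻¹ * u) le_rfl (by norm_num) (by linarith)).mul hB (by norm_num)
    (by norm_num) hu0
  -- Distributing `C` keeps the first factor of every product on a scale below `u`.
  rw [show A * B + C * (E + C) * (F + B) = A * B + C * (E * (F + B) + C * (F + B)) by ring]
  exact (hAB.add hCR).mono (by norm_num; linarith [hB.nonneg]) hu0 le_rfl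

end ThueMorse

open ThueMorse in
/-- `D j` is `Δ̃_{j-1}`, and `iteratedDeriv n (D j) 0 / n!` is its `n`-th Taylor coefficient. -/
theorem thueMorse_model_step_shifted_general (t₀ : ℝ) (D : ℕ → ℝ → ℝ)
    (han : ∀ j : ℕ, ∀ x : ℝ, AnalyticAt ℝ (D j) x)
    (hrec : ∀ j : ℕ, 2 ≤ j → ∀ x : ℝ,
      D j x = (2 + 2 * Real.cos ((x + t₀) / 2)) * D (j - 1) (x / 2) +
        D (j - 2) (x / 4) * (4 * Real.cos ((x + t₀) / 4) + D (j - 2) (x / 4)) *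
          (2 * Real.cos ((x + t₀) / 2) - 2 + D (j - 1) (x / 2)))
    (k : ℕ) (δ β : ℝ) (hδ1 : δ ≤ 1) (hβ0 : 0 < β) (hβ1 : β ≤ 1)
    (hbdk : ∀ n : ℕ,
      |iteratedDeriv n (D k) 0 / (n.factorial : ℝ)| ≤ δ * β ^ (-(n : ℤ)))
    (hbdk1 : ∀ n : ℕ,
      |iteratedDeriv n (D (k + 1)) 0 / (n.factorial : ℝ)| ≤ δ * β ^ (-(n : ℤ))) :
    ∀ n : ℕ,
      |iteratedDeriv n (D (k + 2)) 0 / (n.factorial : ℝ)| ≤ 152 * δ / (2 * β) ^ n := by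
  have hcoeff : ∀ j, (∀ n : ℕ, |iteratedDeriv n (D j) 0 / n !| ≤ δ * β ^ (-(n : ℤ))) →
      GeomCoeffBound (D j) δ β⁻¹ := fun j h =>
    ⟨AnalyticOnNhd.contDiff fun x _ => han j x, by simpa [taylorCoeff, zpow_neg, inv_pow] using h⟩
  have hβ2 : 2⁻¹ ≤ (2 * β)⁻¹ := inv_anti₀ (by positivity) (by linarith)
  have hstep := geomCoeffBound_model_step hδ1 hβ2
    ((geomCoeffBound_const_add_two_mul_cos (a := 2) (by norm_num) 2⁻¹ (t₀ / 2)).mono le_rfl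
      (by positivity) (by norm_num))
    (((hcoeff _ hbdk1).comp_const_mul 2⁻¹).mono le_rfl (by positivity)
      (by rw [mul_inv, abs_of_pos (by norm_num)]))
    (((hcoeff _ hbdk).comp_const_mul 4⁻¹).mono le_rfl (by positivity)
      (by rw [mul_inv, abs_of_pos (by norm_num), ← mul_assoc]; norm_num))
    ((((geomCoeffBound_cos_add (t₀ / 4)).comp_const_mul 4⁻¹).const_mul 4).mono (by norm_num)
      (by positivity) (by norm_num))
    ((geomCoeffBound_const_add_two_mul_cos (a := -2) (by norm_num) 2⁻¹ (t₀ / 2)).mono le_rfl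
      (by positivity) (by norm_num))
  intro n
  convert hstep.le n using 1
  · congr 3
    funext x
    simp only [Pi.add_apply, Pi.mul_apply]
    rw [hrec (k + 2) le_add_self x, Nat.add_sub_cancel, show k + 2 - 1 = k + 1 from rfl]
    ring_nf
  · rw [inv_pow, div_eq_mul_inv]

/-- one step of coefficient control for the recentered error
recurrence with shift `t₀`. Here `D j = Δ̃_{j-1}` (so `D 0 = Δ̃_{-1}`), and the
`n`-th Taylor coefficient at `0` of `D j` is `iteratedDeriv n (D j) 0 / n!`. -/
theorem thueMorse_model_step_shifted (t₀ : ℝ) (D : ℕ → ℝ → ℝ)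
    (han : ∀ j : ℕ, ∀ x : ℝ, AnalyticAt ℝ (D j) x)
    (hrec : ∀ j : ℕ, 2 ≤ j → ∀ x : ℝ,
      D j x = (2 + 2 * Real.cos ((x + t₀) / 2)) * D (j - 1) (x / 2) +
        D (j - 2) (x / 4) * (4 * Real.cos ((x + t₀) / 4) + D (j - 2) (x / 4)) *
          (2 * Real.cos ((x + t₀) / 2) - 2 + D (j - 1) (x / 2)))
    (k : ℕ) (δ β : ℝ) (hδ0 : 0 < δ) (hδ1 : δ ≤ 1) (hβ0 : 0 < β) (hβ1 : β ≤ 1)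
    (hbdk : ∀ n : ℕ,
      |iteratedDeriv n (D k) 0 / (n.factorial : ℝ)| ≤ δ * β ^ (-(n : ℤ)))
    (hbdk1 : ∀ n : ℕ,
      |iteratedDeriv n (D (k + 1)) 0 / (n.factorial : ℝ)| ≤ δ * β ^ (-(n : ℤ))) :
    ∀ n : ℕ,
      |iteratedDeriv n (D (k + 2)) 0 / (n.factorial : ℝ)| ≤ 152 * δ / (2 * β) ^ n :=
  thueMorse_model_step_shifted_general t₀ D han hrec k δ β hδ1 hβ0 hβ1 hbdk hbdk1
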